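/- arXiv:1508.00187 — 3 statements merged into one kernel-verified Lean document; each statement's English description precedes it below -/
import Mathlib

section
/- For any finite poset P, the number of edges of the order polytope O(P) equals the number of edges of the chain polytope C(P). -/
/-
Edges of both polytopes join vertices that are indicator vectors: of ideals for `O(P)` and of
antichains for `C(P)`. A segment between two vertices is an edge exactly when every point of the
polytope that is tight for all constraints tight at both endpoints lies on it; otherwise two other
vertices with the same midpoint witness a non-edge. This identifies the edges of `O(P)` with
ideals `I ⊂ J` with `J \ I` connected, and those of `C(P)` with antichains `A ≠ B` with connected
symmetric difference `Δ`. Ordering each such pair so that `A \ B = max Δ`, the map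
`(I, J) ↦ (max J, min (J \ I) ∪ (max I ∩ max J))` (dropping `min (J \ I)` when `J \ I` is a
point) is a bijection onto the ordered pairs, with inverse `(A, B) ↦ (↓A \ ↑Δ, ↓A)`.
-/

/-- Indicator vector of a subset `W` of `P` in `ℝ^P`. -/
noncomputable def rho {P : Type*} (W : Set P) : P → ℝ := W.indicator fun _ => 1

/-- The order polytope of a finite poset `P`. -/
def orderPolytope (P : Type*) [Fintype P] [PartialOrder P] : Set (P → ℝ) :=
  {f | (∀ i, 0 ≤ f i ∧ f i ≤ 1) ∧ ∀ i j : P, i ≤ j → f j ≤ f i}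

/-- The chain polytope of a finite poset `P`. -/
def chainPolytope (P : Type*) [Fintype P] [PartialOrder P] : Set (P → ℝ) :=
  {f | (∀ i, 0 ≤ f i) ∧ ∀ C : Finset P, IsMaxChain (· ≤ ·) (C : Set P) → ∑ i ∈ C, f i ≤ 1}

/-- A subset `S` of a poset `P` is connected in `P` if any two of its elements are
joined by a sequence within `S` whose consecutive members are comparable in `P`. -/
def ConnIn {P : Type*} [PartialOrder P] (S : Set P) : Prop :=
  ∀ x ∈ S, ∀ y ∈ S,
    Relation.ReflTransGen (fun u v => u ∈ S ∧ v ∈ S ∧ (u ≤ v ∨ v ≤ u)) x y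

/-- The segment joining `u` and `v` is an edge (one-dimensional face) of `S`. -/
def IsEdgeOf {E : Type*} [AddCommGroup E] [Module ℝ E] (S : Set E) (u v : E) : Prop :=
  u ≠ v ∧ IsExtreme ℝ S (segment ℝ u v)

/-- The set of maximal elements of a subset of a poset. -/
def maxSet {P : Type*} [PartialOrder P] (S : Set P) : Set P :=
  {x | x ∈ S ∧ ∀ y ∈ S, x ≤ y → x = y}

/-- The set of minimal elements of a subset of a poset. -/
def minSet {P : Type*} [PartialOrder P] (S : Set P) : Set P :=
  {x | x ∈ S ∧ ∀ y ∈ S, y ≤ x → x = y}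

/-- The 1-skeleton of the order polytope, combinatorially: vertices are poset
ideals, adjacency is proper inclusion with connected difference. -/
def orderSkeleton (P : Type*) [PartialOrder P] :
    SimpleGraph {I : Set P // IsLowerSet I} :=
  SimpleGraph.fromRel fun I J => I.1 ⊂ J.1 ∧ ConnIn (J.1 \ I.1)

/-- The 1-skeleton of the chain polytope, combinatorially: vertices are antichains,
adjacency is connectedness of the symmetric difference. -/
def chainSkeleton (P : Type*) [PartialOrder P] :
    SimpleGraph {A : Set P // IsAntichain (· ≤ ·) A} :=
  SimpleGraph.fromRel fun A B => ConnIn ((A.1 \ B.1) ∪ (B.1 \ A.1))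

/-- The multiset of vertex degrees of a graph (the degree sequence, up to order). -/
noncomputable def degMultiset {V : Type*} [Fintype V] (G : SimpleGraph V) : Multiset ℕ :=
  Finset.univ.val.map fun v => (G.neighborSet v).ncard

/-- `P` contains the poset `X = {a,b,c,g,h}` with `a<c, b<c, c<g, c<h` as a subposet. -/
def ContainsX (P : Type*) [PartialOrder P] : Prop :=
  ∃ a b c g h : P, a < c ∧ b < c ∧ c < g ∧ c < h ∧
    ¬ a ≤ b ∧ ¬ b ≤ a ∧ ¬ g ≤ h ∧ ¬ h ≤ g

/-- The pair `(I, J)` of poset ideals with `I ⊂ J` and `J \ I` connected in `P`. -/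
def OmegaP {P : Type*} [PartialOrder P] (I J : Set P) : Prop :=
  IsLowerSet I ∧ IsLowerSet J ∧ I ⊂ J ∧ ConnIn (J \ I)

/-- The pair `(A, B)` of distinct antichains with connected symmetric difference. -/
def PsiP {P : Type*} [PartialOrder P] (A B : Set P) : Prop :=
  IsAntichain (· ≤ ·) A ∧ IsAntichain (· ≤ ·) B ∧ A ≠ B ∧ ConnIn ((A \ B) ∪ (B \ A))

/-- First component of the map `Ω → Ψ`: `A = max J`. -/
def FmapA {P : Type*} [PartialOrder P] (_I J : Set P) : Set P := maxSet J

/-- Second component of the map `Ω → Ψ`: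
`B = min(J \ I) ∪ (max I ∩ max J)`, with `min(J \ I) := ∅` when `|J \ I| = 1`. -/
def FmapB {P : Type*} [PartialOrder P] (I J : Set P) : Set P :=
  (if (J \ I).ncard = 1 then ∅ else minSet (J \ I)) ∪ (maxSet I ∩ maxSet J)

noncomputable instance {P : Type*} [Fintype P] [PartialOrder P] :
    Fintype {I : Set P // IsLowerSet I} := Fintype.ofFinite _

noncomputable instance {P : Type*} [Fintype P] [PartialOrder P] :
    Fintype {A : Set P // IsAntichain (· ≤ ·) A} := Fintype.ofFinite _

open Set Filter Topology Relation

section Convex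

variable {E : Type*} [AddCommGroup E] [Module ℝ E]

lemma left_mem_extremePoints_segment (u v : E) : u ∈ (segment ℝ u v).extremePoints ℝ := by
  refine ⟨left_mem_segment ℝ u v, ?_⟩
  rintro x₁ hx₁ x₂ hx₂ ⟨s, t, hs, ht, hst, hu⟩
  rw [segment_eq_image'] at hx₁ hx₂
  obtain ⟨a, ⟨ha, -⟩, rfl⟩ := hx₁
  obtain ⟨b, ⟨hb, -⟩, rfl⟩ := hx₂
  have hcomb : (s * a + t * b) • (v - u) = 0 := by
    rw [show s • (u + a • (v - u)) + t • (u + b • (v - u))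
      = (s + t) • u + (s * a + t * b) • (v - u) by module, hst, one_smul, add_eq_left] at hu
    exact hu
  rcases smul_eq_zero.1 hcomb with h | h
  · have ha0 : a = 0 := by nlinarith [mul_nonneg hs.le ha, mul_nonneg ht.le hb]
    simp [ha0]
  · simp [sub_eq_zero.1 h]

lemma IsExtreme.left_mem_extremePoints {S : Set E} {u v : E}
    (h : IsExtreme ℝ S (segment ℝ u v)) : u ∈ S.extremePoints ℝ :=
  h.extremePoints_subset_extremePoints (left_mem_extremePoints_segment u v)

lemma IsExtreme.right_mem_extremePoints {S : Set E} {u v : E}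
    (h : IsExtreme ℝ S (segment ℝ u v)) : v ∈ S.extremePoints ℝ :=
  IsExtreme.left_mem_extremePoints (segment_symm ℝ u v ▸ h)

lemma IsExtreme.mem_segment_of_add_eq {S : Set E} {u v a b : E}
    (h : IsExtreme ℝ S (segment ℝ u v)) (ha : a ∈ S) (hb : b ∈ S) (hab : a + b = u + v) :
    a ∈ segment ℝ u v := by
  have hmid : (1 / 2 : ℝ) • u + (1 / 2 : ℝ) • v ∈ segment ℝ u v :=
    ⟨1 / 2, 1 / 2, by norm_num, by norm_num, by norm_num, rfl⟩
  refine h.2 ha hb hmid ⟨1 / 2, 1 / 2, by norm_num, by norm_num, by norm_num, ?_⟩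
  rw [← smul_add, hab, smul_add]

lemma eventually_add_mul_le {a b a' b' : ℝ} (hab : a ≤ b) (h : a = b → a' = b') :
    ∀ᶠ t in 𝓝 (0 : ℝ), a + t * a' ≤ b + t * b' := by
  rcases hab.lt_or_eq with hlt | heq
  · exact (ContinuousAt.eventually_lt (by fun_prop) (by fun_prop) (by simpa using hlt)).mono
      fun _ => le_of_lt
  · exact .of_forall fun t => by rw [heq, h heq]

lemma eq_zero_of_mem_extremePoints {S : Set E} {x w : E} (hx : x ∈ S.extremePoints ℝ)
    (h : ∀ᶠ t in 𝓝 (0 : ℝ), x + t • w ∈ S) : w = 0 := by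
  have hneg : ∀ᶠ t in 𝓝 (0 : ℝ), x + (-t) • w ∈ S :=
    (continuous_neg.tendsto' 0 0 neg_zero).eventually h
  obtain ⟨t, ⟨hpos, hneg⟩, ht⟩ :=
    (((h.and hneg).filter_mono nhdsWithin_le_nhds).and self_mem_nhdsWithin).exists
      (f := 𝓝[>] (0 : ℝ))
  have hmid : x ∈ openSegment ℝ (x + t • w) (x + (-t) • w) :=
    ⟨1 / 2, 1 / 2, by norm_num, by norm_num, by norm_num, by module⟩
  have hx₁ := (mem_extremePoints.1 hx).2 _ hpos _ hneg hmid |>.1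
  rw [add_eq_left, smul_eq_zero] at hx₁
  exact hx₁.resolve_left (ne_of_gt ht)

/-- The points of `S` at which every valid linear inequality tight at both `u` and `v` is tight
form an extreme subset of `S`, and it contains `[u, v]`. -/
lemma isExtreme_segment_of_tight {S : Set E} (hS : Convex ℝ S) {u v : E} (hu : u ∈ S)
    (hv : v ∈ S)
    (h : ∀ x ∈ S, (∀ (φ : E →ₗ[ℝ] ℝ) (c : ℝ), (∀ y ∈ S, φ y ≤ c) → φ u = c → φ v = c →
      φ x = c) → x ∈ segment ℝ u v) :
    IsExtreme ℝ S (segment ℝ u v) := by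
  set F := {x ∈ S | ∀ (φ : E →ₗ[ℝ] ℝ) (c : ℝ), (∀ y ∈ S, φ y ≤ c) → φ u = c → φ v = c →
    φ x = c}
  have hF : IsExtreme ℝ S F := by
    refine ⟨sep_subset _ _, fun x₁ hx₁ x₂ hx₂ x hx hxo => ⟨hx₁, fun φ c hφ hφu hφv => ?_⟩⟩
    obtain ⟨a, b, ha, hb, hab, rfl⟩ := hxo
    have hc := hx.2 φ c hφ hφu hφv
    simp only [map_add, map_smul, smul_eq_mul] at hc
    have h₁ := mul_le_mul_of_nonneg_left (hφ x₁ hx₁) ha.le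
    have h₂ := mul_le_mul_of_nonneg_left (hφ x₂ hx₂) hb.le
    have hc' : a * c + b * c = c := by rw [← add_mul, hab, one_mul]
    exact mul_left_cancel₀ ha.ne' (by linarith)
  convert hF using 1
  refine subset_antisymm (fun x hx => ⟨hS.segment_subset hu hv hx, fun φ c _ hφu hφv => ?_⟩)
    (fun x hx => h x hx.1 hx.2)
  obtain ⟨a, b, -, -, hab, rfl⟩ := hx
  simp [hφu, hφv, ← add_mul, hab]

end Convex

section Indicator

variable {P : Type*}

lemma rho_of_mem {W : Set P} {i : P} (h : i ∈ W) : rho W i = 1 := indicator_of_mem h _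

lemma rho_of_notMem {W : Set P} {i : P} (h : i ∉ W) : rho W i = 0 := indicator_of_notMem h _

lemma rho_injective : Function.Injective (rho (P := P)) := fun _ _ h => indicator_one_inj ℝ h

lemma rho_add_rho_eq {I J K L : Set P} (hu : K ∪ L = I ∪ J) (hi : K ∩ L = I ∩ J) :
    rho K + rho L = rho I + rho J := by
  rw [rho, rho, ← indicator_union_add_inter, hu, hi, indicator_union_add_inter]; rfl

lemma eq_right_of_rho_mem_segment {I J K : Set P} (h : rho K ∈ segment ℝ (rho I) (rho J))
    (hKI : K ≠ I) : K = J := by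
  obtain ⟨a, b, ha, hb, hab, hK⟩ := h
  obtain ⟨p, hp⟩ := not_forall.1 (mt Set.ext hKI)
  have hp' := congrFun hK p
  have hb1 : b = 1 := by
    by_cases hI : p ∈ I <;> by_cases hJ : p ∈ J <;> by_cases hK : p ∈ K <;>
      simp_all [rho]
  refine rho_injective ?_
  rw [← hK, hb1, show a = 0 by linarith, zero_smul, one_smul, zero_add]

lemma eq_or_eq_of_rho_mem_segment {I J K : Set P} (h : rho K ∈ segment ℝ (rho I) (rho J)) :
    K = I ∨ K = J :=
  or_iff_not_imp_left.2 (eq_right_of_rho_mem_segment h)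

lemma nonempty_symmDiff_of_ne {A B : Set P} (h : A ≠ B) : ((A \ B) ∪ (B \ A)).Nonempty :=
  nonempty_iff_ne_empty.2 fun hAB => by
    rw [union_empty_iff, sdiff_eq_empty, sdiff_eq_empty] at hAB
    exact h (hAB.1.antisymm hAB.2)

lemma injOn_segment_rho {s : Set (Set P × Set P)} (hs : ∀ p ∈ s, (p.2, p.1) ∉ s) :
    InjOn (fun p => segment ℝ (rho p.1) (rho p.2)) s := by
  rintro ⟨I, J⟩ hp ⟨I', J'⟩ hp' heq
  simp only at heq
  have hIJ : I ≠ J := by rintro rfl; exact hs _ hp hp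
  have h₁ := eq_or_eq_of_rho_mem_segment (heq ▸ left_mem_segment ℝ (rho I') (rho J'))
  have h₂ := eq_or_eq_of_rho_mem_segment (heq ▸ right_mem_segment ℝ (rho I') (rho J'))
  have h₃ := eq_or_eq_of_rho_mem_segment (heq.symm ▸ left_mem_segment ℝ (rho I) (rho J))
  have h₄ := eq_or_eq_of_rho_mem_segment (heq.symm ▸ right_mem_segment ℝ (rho I) (rho J))
  have := hs _ hp
  grind

end Indicator

section Connectivity

variable {P : Type*} [PartialOrder P] {S T : Set P}

lemma ConnIn.constant {α : Type*} (hS : ConnIn S) {f : P → α}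
    (hf : ∀ x ∈ S, ∀ y ∈ S, x ≤ y → f x = f y) {x y : P} (hx : x ∈ S) (hy : y ∈ S) :
    f x = f y := by
  have hxy := hS x hx y hy
  clear hy
  induction hxy with
  | refl => rfl
  | tail _ hstep ih =>
    obtain ⟨hb, hc, hbc | hcb⟩ := hstep
    exacts [ih.trans (hf _ hb _ hc hbc), ih.trans (hf _ hc _ hb hcb).symm]

lemma ConnIn.exists_comparable_ne (hS : ConnIn S) {x y : P} (hx : x ∈ S) (hy : y ∈ S)
    (hxy : x ≠ y) : ∃ z ∈ S, z ≠ x ∧ (x ≤ z ∨ z ≤ x) := by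
  by_contra! hisol
  have hconst : ∀ a ∈ S, ∀ b ∈ S, a ≤ b → (a = x) = (b = x) := by
    refine fun a ha b hb hab => propext ⟨?_, ?_⟩ <;> rintro rfl <;> by_contra hne
    exacts [(hisol b hb hne).1 hab, (hisol a ha hne).2 hab]
  exact hxy (eq_iff_iff.1 (hS.constant hconst hx hy) |>.1 rfl).symm

lemma exists_split_of_not_connIn (h : ¬ ConnIn S) :
    ∃ T ⊆ S, T.Nonempty ∧ (S \ T).Nonempty ∧ ∀ a ∈ T, ∀ b ∈ S, (a ≤ b ∨ b ≤ a) → b ∈ T := by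
  simp only [ConnIn, not_forall] at h
  obtain ⟨x, hx, y, hy, hxy⟩ := h
  refine ⟨{z ∈ S | ReflTransGen (fun u v => u ∈ S ∧ v ∈ S ∧ (u ≤ v ∨ v ≤ u)) x z},
    sep_subset _ _, ⟨x, hx, .refl⟩, ⟨y, hy, fun h => hxy h.2⟩,
    fun a ha b hb hab => ⟨hb, ha.2.tail ⟨ha.1, hb, hab⟩⟩⟩

lemma ConnIn.superset_of_comparable (hT : ConnIn T) (hTS : T ⊆ S)
    (h : ∀ x ∈ S, ∃ t ∈ T, t ≤ x ∨ x ≤ t) : ConnIn S := by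
  intro x hx y hy
  obtain ⟨s, hs, hxs⟩ := h x hx
  obtain ⟨t, ht, hyt⟩ := h y hy
  refine .head ⟨hx, hTS hs, hxs.symm⟩ (.tail ?_ ⟨hTS ht, hy, hyt⟩)
  exact ReflTransGen.mono (fun u v huv => ⟨hTS huv.1, hTS huv.2.1, huv.2.2⟩) _ _ (hT s hs t ht)

/-- A path in `S` is shadowed by a path in `T` alternating between lower and upper bounds. -/
lemma ConnIn.subset_of_bounds (hS : ConnIn S) (hTS : T ⊆ S) (hlow : ∀ x ∈ S, ∃ t ∈ T, t ≤ x)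
    (hup : ∀ x ∈ S, ∃ t ∈ T, x ≤ t) : ConnIn T := by
  intro u hu v hv
  let R := ReflTransGen (fun a b => a ∈ T ∧ b ∈ T ∧ (a ≤ b ∨ b ≤ a)) u
  have step : ∀ a ∈ T, ∀ b ∈ T, (a ≤ b ∨ b ≤ a) → R a → R b :=
    fun a ha b hb hab hRa => hRa.tail ⟨ha, hb, hab⟩
  suffices ∀ x, ReflTransGen (fun a b => a ∈ S ∧ b ∈ S ∧ (a ≤ b ∨ b ≤ a)) u x →
      ∀ d ∈ T, (d ≤ x ∨ x ≤ d) → R d from this v (hS u (hTS hu) v (hTS hv)) v hv (.inl le_rfl)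
  intro x hux
  induction hux with
  | refl => exact fun d hd hdu => step u hu d hd hdu.symm .refl
  | tail _ hxy ih =>
    rename_i x y _
    obtain ⟨hx, hy, hxy | hyx⟩ := hxy
    · obtain ⟨e, he, hex⟩ := hlow x hx
      have hRe := ih e he (.inl hex)
      rintro d hd (hdy | hyd)
      · obtain ⟨f, hf, hyf⟩ := hup y hy
        exact step f hf d hd (.inr (hdy.trans hyf))
          (step e he f hf (.inl (hex.trans (hxy.trans hyf))) hRe)
      · exact step e he d hd (.inl (hex.trans (hxy.trans hyd))) hRe
    · obtain ⟨e, he, hxe⟩ := hup x hx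
      have hRe := ih e he (.inr hxe)
      rintro d hd (hdy | hyd)
      · exact step e he d hd (.inr (hdy.trans (hyx.trans hxe))) hRe
      · obtain ⟨f, hf, hfy⟩ := hlow y hy
        exact step f hf d hd (.inl (hfy.trans hyd))
          (step e he f hf (.inr (hfy.trans (hyx.trans hxe))) hRe)

end Connectivity

section MaxMin

variable {P : Type*} [PartialOrder P] {S I J A : Set P}

lemma minSet_subset (S : Set P) : minSet S ⊆ S := fun _ h => h.1

lemma isAntichain_maxSet (S : Set P) : IsAntichain (· ≤ ·) (maxSet S) :=
  fun _ ha _ hb hne hab => hne (ha.2 _ hb.1 hab)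

lemma isAntichain_minSet (S : Set P) : IsAntichain (· ≤ ·) (minSet S) :=
  fun _ ha _ hb hne hab => hne (hb.2 _ ha.1 hab).symm

lemma maxSet_inter_maxSet_of_subset (h : I ⊆ J) : maxSet I ∩ maxSet J = I ∩ maxSet J :=
  Set.ext fun _ => ⟨fun hx => ⟨hx.1.1, hx.2⟩,
    fun hx => ⟨⟨hx.1, fun y hy => hx.2.2 y (h hy)⟩, hx.2⟩⟩

lemma maxSet_lowerClosure (hA : IsAntichain (· ≤ ·) A) :
    maxSet (lowerClosure A : Set P) = A := by
  ext x
  simp only [maxSet, SetLike.mem_coe, mem_lowerClosure, mem_ofPred_eq]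
  refine ⟨fun ⟨⟨a, ha, hxa⟩, hmax⟩ => hmax a ⟨a, ha, le_rfl⟩ hxa ▸ ha,
    fun hx => ⟨⟨x, hx, le_rfl⟩, fun y ⟨a, ha, hya⟩ hxy => ?_⟩⟩
  obtain rfl : x = a := hA.eq hx ha (hxy.trans hya)
  exact le_antisymm hxy hya

variable [Finite P]

lemma exists_le_mem_maxSet {x : P} (hx : x ∈ S) : ∃ m ∈ maxSet S, x ≤ m := by
  obtain ⟨m, hxm, hm, hmax⟩ := Finite.exists_le_maximal (p := (· ∈ S)) hx
  exact ⟨m, ⟨hm, fun y hy hmy => le_antisymm hmy (hmax hy hmy)⟩, hxm⟩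

lemma exists_mem_minSet_le {x : P} (hx : x ∈ S) : ∃ m ∈ minSet S, m ≤ x := by
  obtain ⟨m, hmx, hm, hmin⟩ := Finite.exists_le_minimal (p := (· ∈ S)) hx
  exact ⟨m, ⟨hm, fun y hy hym => le_antisymm (hmin hy hym) hym⟩, hmx⟩

lemma lowerClosure_maxSet (hJ : IsLowerSet J) : (lowerClosure (maxSet J) : Set P) = J := by
  ext x
  simp only [SetLike.mem_coe, mem_lowerClosure]
  exact ⟨fun ⟨a, ha, hxa⟩ => hJ hxa ha.1, fun hx => exists_le_mem_maxSet hx⟩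

end MaxMin

section OrderPolytope

variable {P : Type*} [Fintype P] [PartialOrder P] {I J : Set P}

lemma convex_orderPolytope : Convex ℝ (orderPolytope P) := by
  rintro x ⟨hx01, hxmono⟩ y ⟨hy01, hymono⟩ s t hs ht hst
  refine ⟨fun i => ⟨?_, ?_⟩, fun i j hij => ?_⟩ <;>
    simp only [Pi.add_apply, Pi.smul_apply, smul_eq_mul]
  · nlinarith [hx01 i, hy01 i]
  · nlinarith [hx01 i, hy01 i]
  · nlinarith [hxmono i j hij, hymono i j hij]

lemma rho_mem_orderPolytope (hI : IsLowerSet I) : rho I ∈ orderPolytope P := by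
  refine ⟨fun i => ?_, fun i j hij => ?_⟩
  · by_cases hi : i ∈ I <;> simp [rho, hi]
  · by_cases hj : j ∈ I
    · rw [rho_of_mem hj, rho_of_mem (hI hij hj)]
    · by_cases hi : i ∈ I <;> simp [rho, hi, hj]

/-- Shifting the level set `{j | f j = f i}` of a value strictly between `0` and `1` up and down
keeps `f` inside the order polytope. -/
lemma eq_zero_or_eq_one_of_mem_extremePoints_orderPolytope {f : P → ℝ}
    (hf : f ∈ (orderPolytope P).extremePoints ℝ) (i : P) : f i = 0 ∨ f i = 1 := by
  obtain ⟨⟨hf01, hfmono⟩, -⟩ := id hf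
  by_contra! hi
  have h0 : 0 < f i := (hf01 i).1.lt_of_ne hi.1.symm
  have h1 : f i < 1 := (hf01 i).2.lt_of_ne hi.2
  set L := {j | f j = f i}
  have hL : ∀ j, f j = 0 ∨ f j = 1 → j ∉ L := by
    rintro j (hj | hj) (hjL : f j = f i) <;> linarith
  have hmem : ∀ᶠ t in 𝓝 (0 : ℝ), f + t • rho L ∈ orderPolytope P := by
    simp only [orderPolytope, mem_ofPred_eq, Pi.add_apply, Pi.smul_apply, smul_eq_mul,
      eventually_and, eventually_all]
    refine ⟨fun j => ⟨?_, ?_⟩, fun j k hjk => ?_⟩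
    · refine (eventually_add_mul_le (a' := 0) (b' := rho L j) (hf01 j).1 fun hj => ?_).mono
        fun t ht => by simpa using ht
      rw [rho_of_notMem (hL j (.inl hj.symm))]
    · refine (eventually_add_mul_le (a' := rho L j) (b' := 0) (hf01 j).2 fun hj => ?_).mono
        fun t ht => by simpa using ht
      rw [rho_of_notMem (hL j (.inr hj))]
    · refine eventually_add_mul_le (hfmono j k hjk) fun hjk => ?_
      simp only [rho, indicator, L, mem_ofPred_eq, hjk]
  have := congrFun (eq_zero_of_mem_extremePoints hf hmem) i
  simp [rho_of_mem (show i ∈ L from rfl)] at this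

lemma exists_rho_of_mem_extremePoints_orderPolytope {f : P → ℝ}
    (hf : f ∈ (orderPolytope P).extremePoints ℝ) : ∃ I, IsLowerSet I ∧ f = rho I := by
  have h01 := eq_zero_or_eq_one_of_mem_extremePoints_orderPolytope hf
  refine ⟨{j | f j = 1}, fun a b hba (ha : f a = 1) => ?_, funext fun j => ?_⟩
  · exact le_antisymm (hf.1.1 b).2 (ha ▸ hf.1.2 b a hba)
  · rcases h01 j with hj | hj
    · rw [hj, rho_of_notMem (by simp [hj])]
    · rw [hj, rho_of_mem (show j ∈ {j | f j = 1} from hj)]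

lemma isExtreme_orderPolytope_of_omegaP (h : OmegaP I J) :
    IsExtreme ℝ (orderPolytope P) (segment ℝ (rho I) (rho J)) := by
  obtain ⟨hI, hJ, hIJ, hconn⟩ := h
  refine isExtreme_segment_of_tight convex_orderPolytope (rho_mem_orderPolytope hI)
    (rho_mem_orderPolytope hJ) fun x hx htight => ?_
  let π : P → (P → ℝ) →ₗ[ℝ] ℝ := LinearMap.proj
  have hxI : ∀ j ∈ I, x j = 1 := fun j hj => by
    simpa [π] using htight (π j) 1 (fun y hy => (hy.1 j).2)
      (by simp [π, rho_of_mem hj]) (by simp [π, rho_of_mem (hIJ.subset hj)])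
  have hxJ : ∀ j ∉ J, x j = 0 := fun j hj => by
    simpa [π] using htight (-π j) 0 (fun y hy => by simpa [π] using (hy.1 j).1)
      (by simp [π, rho_of_notMem fun h => hj (hIJ.subset h)]) (by simp [π, rho_of_notMem hj])
  have hxS : ∀ a ∈ J \ I, ∀ b ∈ J \ I, a ≤ b → x a = x b := fun a ha b hb hab => by
    have := htight (π b - π a) 0 (fun y hy => by simpa [π] using hy.2 a b hab)
      (by simp [π, rho_of_notMem ha.2, rho_of_notMem hb.2])
      (by simp [π, rho_of_mem ha.1, rho_of_mem hb.1])
    simp only [π, LinearMap.sub_apply, LinearMap.proj_apply] at this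
    linarith
  obtain ⟨u, hu⟩ := exists_of_ssubset hIJ
  rw [segment_eq_image']
  refine ⟨x u, hx.1 u, funext fun j => ?_⟩
  by_cases hjI : j ∈ I
  · simp [rho_of_mem hjI, rho_of_mem (hIJ.subset hjI), hxI j hjI]
  by_cases hjJ : j ∈ J
  · simp [rho_of_notMem hjI, rho_of_mem hjJ, hconn.constant hxS hu ⟨hjJ, hjI⟩]
  · simp [rho_of_notMem hjI, rho_of_notMem hjJ, hxJ j hjJ]

lemma subset_or_subset_of_isExtreme_orderPolytope (hI : IsLowerSet I) (hJ : IsLowerSet J)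
    (h : IsExtreme ℝ (orderPolytope P) (segment ℝ (rho I) (rho J))) : I ⊆ J ∨ J ⊆ I := by
  have hsum : rho (I ∩ J) + rho (I ∪ J) = rho I + rho J :=
    rho_add_rho_eq (by ext; simp only [mem_union, mem_inter_iff]; tauto)
      (by ext; simp only [mem_union, mem_inter_iff]; tauto)
  rcases eq_or_eq_of_rho_mem_segment (h.mem_segment_of_add_eq
    (rho_mem_orderPolytope (hI.inter hJ)) (rho_mem_orderPolytope (hI.union hJ)) hsum) with h | h
  · exact .inl (inter_eq_left.1 h)
  · exact .inr (inter_eq_right.1 h)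

/-- If `J \ I` splits into two parts with no comparabilities between them, lifting one part from
`J` to `I` gives ideals `I ∪ T` and `J \ T` whose indicators have the same midpoint. -/
lemma connIn_of_isExtreme_orderPolytope (hI : IsLowerSet I) (hJ : IsLowerSet J) (hIJ : I ⊆ J)
    (h : IsExtreme ℝ (orderPolytope P) (segment ℝ (rho I) (rho J))) : ConnIn (J \ I) := by
  by_contra hc
  obtain ⟨T, hTS, ⟨x, hx⟩, ⟨y, hy, hyT⟩, hT⟩ := exists_split_of_not_connIn hc
  have hlow₁ : IsLowerSet (I ∪ T) := by
    rintro a b hba (ha | ha)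
    · exact .inl (hI hba ha)
    · by_cases hb : b ∈ I
      · exact .inl hb
      · exact .inr (hT a ha b ⟨hJ hba (hTS ha).1, hb⟩ (.inr hba))
  have hlow₂ : IsLowerSet (J \ T) := by
    refine fun a b hba ha => ⟨hJ hba ha.1, fun hb => ha.2 (hT b hb a ⟨ha.1, fun haI => ?_⟩ ?_)⟩
    exacts [(hTS hb).2 (hI hba haI), .inl hba]
  have hsum : rho (I ∪ T) + rho (J \ T) = rho I + rho J := by
    refine rho_add_rho_eq ?_ ?_ <;> ext z <;> have := @hTS z <;> have := @hIJ z <;>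
      simp only [Set.mem_union, Set.mem_inter_iff, Set.mem_sdiff] at * <;> tauto
  rcases eq_or_eq_of_rho_mem_segment (h.mem_segment_of_add_eq (rho_mem_orderPolytope hlow₁)
    (rho_mem_orderPolytope hlow₂) hsum) with hK | hK
  · exact (hTS hx).2 (hK ▸ Or.inr hx)
  · exact (hK ▸ hy.1 : y ∈ I ∪ T).elim hy.2 hyT

lemma setOf_edges_orderPolytope :
    {e : Set (P → ℝ) | ∃ u v, IsEdgeOf (orderPolytope P) u v ∧ e = segment ℝ u v} =
      (fun p : Set P × Set P => segment ℝ (rho p.1) (rho p.2)) '' {p | OmegaP p.1 p.2} := by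
  ext e
  constructor
  · rintro ⟨u, v, ⟨huv, h⟩, rfl⟩
    obtain ⟨I, hI, rfl⟩ := exists_rho_of_mem_extremePoints_orderPolytope h.left_mem_extremePoints
    obtain ⟨J, hJ, rfl⟩ := exists_rho_of_mem_extremePoints_orderPolytope h.right_mem_extremePoints
    have hne : I ≠ J := by rintro rfl; exact huv rfl
    rcases subset_or_subset_of_isExtreme_orderPolytope hI hJ h with hIJ | hJI
    · exact ⟨(I, J), ⟨hI, hJ, hIJ.ssubset_of_ne hne,
        connIn_of_isExtreme_orderPolytope hI hJ hIJ h⟩, rfl⟩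
    · rw [segment_symm] at h ⊢
      exact ⟨(J, I), ⟨hJ, hI, hJI.ssubset_of_ne hne.symm,
        connIn_of_isExtreme_orderPolytope hJ hI hJI h⟩, rfl⟩
  · rintro ⟨⟨I, J⟩, h, rfl⟩
    exact ⟨rho I, rho J, ⟨rho_injective.ne h.2.2.1.ne, isExtreme_orderPolytope_of_omegaP h⟩, rfl⟩

end OrderPolytope

section ChainPolytope

variable {P : Type*} [PartialOrder P] {A B : Set P}

lemma IsAntichain.eq_of_isChain (hA : IsAntichain (· ≤ ·) A) {C : Set P}
    (hC : IsChain (· ≤ ·) C) {a b : P} (ha : a ∈ A) (haC : a ∈ C) (hb : b ∈ A) (hbC : b ∈ C) :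
    a = b :=
  (hC.total haC hbC).elim (hA.eq ha hb) fun hba => (hA.eq hb ha hba).symm

lemma sum_rho_eq_one (hA : IsAntichain (· ≤ ·) A) {C : Finset P}
    (hC : IsChain (· ≤ ·) (C : Set P)) {a : P} (haC : a ∈ C) (ha : a ∈ A) :
    ∑ i ∈ C, rho A i = 1 := by
  rw [Finset.sum_eq_single_of_mem a haC fun b hbC hba =>
    rho_of_notMem fun hb => hba (hA.eq_of_isChain hC hb hbC ha haC), rho_of_mem ha]

lemma sum_rho_le_one (hA : IsAntichain (· ≤ ·) A) {C : Finset P}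
    (hC : IsChain (· ≤ ·) (C : Set P)) : ∑ i ∈ C, rho A i ≤ 1 := by
  by_cases h : ∃ a ∈ C, a ∈ A
  · obtain ⟨a, haC, ha⟩ := h
    exact (sum_rho_eq_one hA hC haC ha).le
  · rw [Finset.sum_eq_zero fun i hi => rho_of_notMem fun hiA => h ⟨i, hi, hiA⟩]
    exact zero_le_one

lemma isAntichain_sdiff_union_inter (hA : IsAntichain (· ≤ ·) A) (hB : IsAntichain (· ≤ ·) B)
    {T : Set P} (hT : ∀ a ∈ T, ∀ b ∈ (A \ B) ∪ (B \ A), (a ≤ b ∨ b ≤ a) → b ∈ T) :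
    IsAntichain (· ≤ ·) ((A \ T) ∪ (B ∩ T)) := by
  rintro a (ha | ha) b (hb | hb) hne hab
  · exact hA ha.1 hb.1 hne hab
  · by_cases haB : a ∈ B
    · exact hB haB hb.1 hne hab
    · exact ha.2 (hT b hb.2 a (.inl ⟨ha.1, haB⟩) (.inr hab))
  · by_cases hbB : b ∈ B
    · exact hB ha.1 hbB hne hab
    · exact hb.2 (hT a ha.2 b (.inl ⟨hb.1, hbB⟩) (.inl hab))
  · exact hB ha.1 hb.1 hne hab

/-- On the connected symmetric difference, `1 - x` on `A \ B` and `x` on `B \ A` form one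
constant, which is the position of `x` on the segment. -/
lemma mem_segment_rho_of_connIn (hA : IsAntichain (· ≤ ·) A) (hB : IsAntichain (· ≤ ·) B)
    (hAB : A ≠ B) (hconn : ConnIn ((A \ B) ∪ (B \ A))) {x : P → ℝ}
    (hx01 : ∀ j, 0 ≤ x j ∧ x j ≤ 1) (hx0 : ∀ j, j ∉ A → j ∉ B → x j = 0)
    (hxAB : ∀ j ∈ A, j ∈ B → x j = 1)
    (hcross : ∀ a ∈ A \ B, ∀ b ∈ B \ A, (a ≤ b ∨ b ≤ a) → x a + x b = 1) :
    x ∈ segment ℝ (rho A) (rho B) := by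
  classical
  let g : P → ℝ := fun w => if w ∈ A then 1 - x w else x w
  have hg : ∀ a ∈ (A \ B) ∪ (B \ A), ∀ b ∈ (A \ B) ∪ (B \ A), a ≤ b → g a = g b := by
    rintro a (ha | ha) b (hb | hb) hab
    · rw [hA.eq ha.1 hb.1 hab]
    · simp only [g, if_pos ha.1, if_neg hb.2]
      linarith [hcross a ha b hb (.inl hab)]
    · simp only [g, if_neg ha.2, if_pos hb.1]
      linarith [hcross b hb a ha (.inr hab)]
    · rw [hB.eq ha.1 hb.1 hab]
  obtain ⟨u, hu⟩ := nonempty_symmDiff_of_ne hAB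
  rw [segment_eq_image']
  refine ⟨g u, ?_, funext fun j => ?_⟩
  · have := hx01 u
    constructor <;> (simp only [g]; split_ifs <;> linarith)
  by_cases hjA : j ∈ A <;> by_cases hjB : j ∈ B
  · simp [rho_of_mem hjA, rho_of_mem hjB, hxAB j hjA hjB]
  · have hj : g j = 1 - x j := if_pos hjA
    have := hconn.constant hg (.inl ⟨hjA, hjB⟩) hu
    simp only [Pi.add_apply, Pi.smul_apply, Pi.sub_apply, smul_eq_mul, rho_of_mem hjA,
      rho_of_notMem hjB]
    linarith
  · have hj : g j = x j := if_neg hjA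
    have := hconn.constant hg (.inr ⟨hjB, hjA⟩) hu
    simp only [Pi.add_apply, Pi.smul_apply, Pi.sub_apply, smul_eq_mul, rho_of_notMem hjA,
      rho_of_mem hjB]
    linarith
  · simp [rho_of_notMem hjA, rho_of_notMem hjB, hx0 j hjA hjB]

variable [Fintype P]

lemma exists_isMaxChain_superset {s : Set P} (hs : IsChain (· ≤ ·) s) :
    ∃ C : Finset P, IsMaxChain (· ≤ ·) (C : Set P) ∧ s ⊆ C := by
  obtain ⟨M, hM, hsM⟩ := hs.exists_maxChain
  exact ⟨M.toFinite.toFinset, by simpa using hM, by simpa using hsM⟩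

lemma sum_le_one_of_isChain {f : P → ℝ} (hf : f ∈ chainPolytope P) {C : Finset P}
    (hC : IsChain (· ≤ ·) (C : Set P)) : ∑ i ∈ C, f i ≤ 1 := by
  obtain ⟨D, hD, hCD⟩ := exists_isMaxChain_superset hC
  exact (Finset.sum_le_sum_of_subset_of_nonneg (Finset.coe_subset.1 hCD)
    fun i _ _ => hf.1 i).trans (hf.2 D hD)

lemma le_one_of_mem_chainPolytope {f : P → ℝ} (hf : f ∈ chainPolytope P) (i : P) : f i ≤ 1 := by
  simpa using sum_le_one_of_isChain hf (C := {i}) (by simp [IsChain])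

lemma convex_chainPolytope : Convex ℝ (chainPolytope P) := by
  rintro x ⟨hx0, hxC⟩ y ⟨hy0, hyC⟩ s t hs ht hst
  refine ⟨fun i => ?_, fun C hC => ?_⟩
  · simp only [Pi.add_apply, Pi.smul_apply, smul_eq_mul]
    nlinarith [hx0 i, hy0 i]
  · simp only [Pi.add_apply, Pi.smul_apply, smul_eq_mul, Finset.sum_add_distrib, ← Finset.mul_sum]
    nlinarith [hxC C hC, hyC C hC]

lemma rho_mem_chainPolytope (hA : IsAntichain (· ≤ ·) A) : rho A ∈ chainPolytope P :=
  ⟨fun i => by by_cases hi : i ∈ A <;> simp [rho, hi], fun _ hC => sum_rho_le_one hA hC.1⟩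

/-- Otherwise the chain could be rerouted above its top support element to gain mass. -/
lemma exists_mem_maxSet_support_of_sum_eq_one {f : P → ℝ} (hf : f ∈ chainPolytope P)
    {C : Finset P} (hC : IsMaxChain (· ≤ ·) (C : Set P)) (hsum : ∑ i ∈ C, f i = 1) :
    ∃ a ∈ C, a ∈ maxSet {i | f i ≠ 0} := by
  classical
  obtain ⟨x₀, hx₀C, hx₀⟩ : ∃ x ∈ C, f x ≠ 0 := by
    by_contra! h
    rw [Finset.sum_eq_zero h] at hsum
    exact zero_ne_one hsum
  obtain ⟨x, -, ⟨hxC, hx⟩, hxmax⟩ :=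
    Finite.exists_le_maximal (p := fun i => i ∈ C ∧ f i ≠ 0) ⟨hx₀C, hx₀⟩
  refine ⟨x, hxC, hx, fun y hy hxy => ?_⟩
  by_contra hne
  have hbelow : ∑ i ∈ C with i ≤ x, f i = 1 := by
    rw [Finset.sum_filter_of_ne fun i hiC hi =>
      (hC.1.total hiC hxC).elim id fun hxi => hxmax ⟨hiC, hi⟩ hxi, hsum]
  have hchain : IsChain (· ≤ ·) (↑(insert y {i ∈ C | i ≤ x}) : Set P) := by
    rw [Finset.coe_insert, Finset.coe_filter]
    exact (hC.1.mono fun i hi => hi.1).insert fun b hb _ => .inr (hb.2.trans hxy)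
  have hy_notMem : y ∉ {i ∈ C | i ≤ x} := fun hyC =>
    hne (le_antisymm hxy (Finset.mem_filter.1 hyC).2)
  have := sum_le_one_of_isChain hf hchain
  rw [Finset.sum_insert hy_notMem, hbelow] at this
  exact hy (le_antisymm (by linarith) (hf.1 y))

/-- Moving `f` towards and away from the indicator of the maximal elements of its support keeps
it in the chain polytope: every tight maximal chain meets that antichain exactly once. -/
lemma eq_rho_of_mem_extremePoints_chainPolytope {f : P → ℝ}
    (hf : f ∈ (chainPolytope P).extremePoints ℝ) : f = rho (maxSet {i | f i ≠ 0}) := by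
  set A := maxSet {i | f i ≠ 0}
  obtain ⟨⟨hf0, hfC⟩, -⟩ := id hf
  have hmem : ∀ᶠ t in 𝓝 (0 : ℝ), f + t • (rho A - f) ∈ chainPolytope P := by
    simp only [chainPolytope, mem_ofPred_eq, Pi.add_apply, Pi.smul_apply, Pi.sub_apply,
      smul_eq_mul, Finset.sum_add_distrib, ← Finset.mul_sum, eventually_and, eventually_all]
    refine ⟨fun j => ?_, fun C hC => ?_⟩
    · refine (eventually_add_mul_le (a' := 0) (hf0 j) fun hj => ?_).mono fun t ht => by
        simpa using ht
      rw [← hj, rho_of_notMem fun hjA => hjA.1 hj.symm, sub_zero]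
    · refine (eventually_add_mul_le (b' := 0) (hfC C hC) fun hsum => ?_).mono fun t ht => by
        simpa using ht
      obtain ⟨a, haC, ha⟩ := exists_mem_maxSet_support_of_sum_eq_one ⟨hf0, hfC⟩ hC hsum
      rw [sum_rho_eq_one (isAntichain_maxSet _) hC.1 haC ha, hsum,
        sub_self]
  exact (sub_eq_zero.1 (eq_zero_of_mem_extremePoints hf hmem)).symm

lemma exists_rho_of_mem_extremePoints_chainPolytope {f : P → ℝ}
    (hf : f ∈ (chainPolytope P).extremePoints ℝ) : ∃ A, IsAntichain (· ≤ ·) A ∧ f = rho A :=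
  ⟨_, isAntichain_maxSet _, eq_rho_of_mem_extremePoints_chainPolytope hf⟩

lemma isExtreme_chainPolytope_of_psiP (h : PsiP A B) :
    IsExtreme ℝ (chainPolytope P) (segment ℝ (rho A) (rho B)) := by
  obtain ⟨hA, hB, hAB, hconn⟩ := h
  refine isExtreme_segment_of_tight convex_chainPolytope (rho_mem_chainPolytope hA)
    (rho_mem_chainPolytope hB) fun x hx htight => ?_
  let π : P → (P → ℝ) →ₗ[ℝ] ℝ := LinearMap.proj
  have hx0 : ∀ j, j ∉ A → j ∉ B → x j = 0 := fun j hjA hjB => by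
    simpa [π] using htight (-π j) 0 (fun y hy => by simpa [π] using hy.1 j)
      (by simp [π, rho_of_notMem hjA]) (by simp [π, rho_of_notMem hjB])
  -- a maximal chain through comparable `a ∈ A` and `b ∈ B` is tight at `rho A` and `rho B`
  have hchain : ∀ a ∈ A, ∀ b ∈ B, (a ≤ b ∨ b ≤ a) →
      ∃ D : Finset P, IsChain (· ≤ ·) (D : Set P) ∧ a ∈ D ∧ b ∈ D ∧ ∑ i ∈ D, x i = 1 := by
    intro a ha b hb hab
    obtain ⟨D, hD, habD⟩ := exists_isMaxChain_superset (s := {a, b})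
      (IsChain.singleton.insert fun c hc _ => by rw [eq_of_mem_singleton hc]; exact hab)
    have haD : a ∈ D := habD (by simp)
    have hbD : b ∈ D := habD (by simp)
    refine ⟨D, hD.1, haD, hbD, ?_⟩
    simpa [π] using htight (∑ i ∈ D, π i) 1 (fun y hy => by simpa [π] using hy.2 D hD)
      (by simpa [π] using sum_rho_eq_one hA hD.1 haD ha)
      (by simpa [π] using sum_rho_eq_one hB hD.1 hbD hb)
  have hvanish : ∀ {D : Finset P}, IsChain (· ≤ ·) (D : Set P) → ∀ a ∈ A, a ∈ D → ∀ b ∈ B,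
      b ∈ D → ∀ c ∈ D, c ≠ a ∧ c ≠ b → x c = 0 := fun hD a ha haD b hb hbD c hcD hc =>
    hx0 c (fun hcA => hc.1 (hA.eq_of_isChain hD hcA hcD ha haD))
      (fun hcB => hc.2 (hB.eq_of_isChain hD hcB hcD hb hbD))
  have hxAB : ∀ j ∈ A, j ∈ B → x j = 1 := fun j hjA hjB => by
    obtain ⟨D, hD, hjD, -, hsum⟩ := hchain j hjA j hjB (.inl le_rfl)
    rwa [Finset.sum_eq_single_of_mem j hjD fun c hcD hc =>
      hvanish hD j hjA hjD j hjB hjD c hcD ⟨hc, hc⟩] at hsum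
  have hcross : ∀ a ∈ A \ B, ∀ b ∈ B \ A, (a ≤ b ∨ b ≤ a) → x a + x b = 1 :=
    fun a ha b hb hab => by
      obtain ⟨D, hD, haD, hbD, hsum⟩ := hchain a ha.1 b hb.1 hab
      rwa [Finset.sum_eq_add a b (fun h => hb.2 (h ▸ ha.1))
        (hvanish hD a ha.1 haD b hb.1 hbD) (absurd haD) (absurd hbD)] at hsum
  exact mem_segment_rho_of_connIn hA hB hAB hconn
    (fun j => ⟨hx.1 j, le_one_of_mem_chainPolytope hx j⟩) hx0 hxAB hcross

lemma connIn_of_isExtreme_chainPolytope (hA : IsAntichain (· ≤ ·) A)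
    (hB : IsAntichain (· ≤ ·) B) (h : IsExtreme ℝ (chainPolytope P) (segment ℝ (rho A) (rho B))) :
    ConnIn ((A \ B) ∪ (B \ A)) := by
  by_contra hc
  obtain ⟨T, hTS, ⟨x, hx⟩, ⟨y, hy, hyT⟩, hT⟩ := exists_split_of_not_connIn hc
  have hA' := isAntichain_sdiff_union_inter hA hB hT
  have hB' := isAntichain_sdiff_union_inter hB hA (union_comm (A \ B) _ ▸ hT)
  have hsum : rho ((A \ T) ∪ (B ∩ T)) + rho ((B \ T) ∪ (A ∩ T)) = rho A + rho B := by
    refine rho_add_rho_eq ?_ ?_ <;> ext z <;>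
      simp only [Set.mem_union, Set.mem_inter_iff, Set.mem_sdiff] <;> tauto
  have hxS := hTS hx
  rcases eq_or_eq_of_rho_mem_segment (h.mem_segment_of_add_eq (rho_mem_chainPolytope hA')
    (rho_mem_chainPolytope hB') hsum) with hK | hK
  · have := Set.ext_iff.1 hK x
    simp only [Set.mem_union, Set.mem_inter_iff, Set.mem_sdiff] at this hxS
    tauto
  · have := Set.ext_iff.1 hK y
    simp only [Set.mem_union, Set.mem_inter_iff, Set.mem_sdiff] at this hy
    tauto

end ChainPolytope

section Orientation

variable {P : Type*} [PartialOrder P] {A B : Set P}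

/-- Picks one of the two orders of a pair in `PsiP`; these are the pairs
`(FmapA I J, FmapB I J)`. -/
def OrientedPsiP (A B : Set P) : Prop :=
  PsiP A B ∧ A \ B = maxSet ((A \ B) ∪ (B \ A))

lemma PsiP.symm (h : PsiP A B) : PsiP B A :=
  ⟨h.2.1, h.1, h.2.2.1.symm, union_comm (A \ B) _ ▸ h.2.2.2⟩

lemma mem_iff_notMem_of_lt (hA : IsAntichain (· ≤ ·) A) (hB : IsAntichain (· ≤ ·) B) {x y : P}
    (hx : x ∈ (A \ B) ∪ (B \ A)) (hy : y ∈ (A \ B) ∪ (B \ A)) (hxy : x < y) : x ∈ A ↔ y ∉ A := by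
  rcases hx with hx | hx <;> rcases hy with hy | hy
  · exact absurd (hA.eq hx.1 hy.1 hxy.le) hxy.ne
  · simp [hx.1, hy.2]
  · simp [hx.2, hy.1]
  · exact absurd (hB.eq hx.1 hy.1 hxy.le) hxy.ne

/-- The symmetric difference of two antichains has no chain of length three. -/
lemma mem_maxSet_of_lt (hA : IsAntichain (· ≤ ·) A) (hB : IsAntichain (· ≤ ·) B) {x y : P}
    (hx : x ∈ (A \ B) ∪ (B \ A)) (hy : y ∈ (A \ B) ∪ (B \ A)) (hxy : x < y) :
    y ∈ maxSet ((A \ B) ∪ (B \ A)) := by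
  refine ⟨hy, fun z hz hyz => ?_⟩
  by_contra hne
  have h₁ := mem_iff_notMem_of_lt hA hB hx hy hxy
  have h₂ := mem_iff_notMem_of_lt hA hB hy hz (hyz.lt_of_ne hne)
  have h₃ := mem_iff_notMem_of_lt hA hB hx hz (hxy.trans_le hyz)
  tauto

/-- Along a comparability `x < y` inside the symmetric difference, `x` and `y` lie in different
antichains and only `y` is maximal, so `w ∈ A ↔ w ∈ maxSet Δ` is constant on the connected `Δ`. -/
lemma PsiP.orientedPsiP_or (h : PsiP A B) : OrientedPsiP A B ∨ OrientedPsiP B A := by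
  obtain ⟨hA, hB, hAB, hconn⟩ := h
  set Δ := (A \ B) ∪ (B \ A)
  have hconst : ∀ x ∈ Δ, ∀ y ∈ Δ, x ≤ y →
      (x ∈ A ↔ x ∈ maxSet Δ) = (y ∈ A ↔ y ∈ maxSet Δ) := by
    intro x hx y hy hxy
    rcases hxy.eq_or_lt with rfl | hlt
    · rfl
    have := mem_iff_notMem_of_lt hA hB hx hy hlt
    have := mem_maxSet_of_lt hA hB hx hy hlt
    have : x ∉ maxSet Δ := fun hmax => hlt.ne (hmax.2 y hy hlt.le)
    exact propext (by tauto)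
  obtain ⟨u, hu⟩ := nonempty_symmDiff_of_ne hAB
  have hmax : ∀ w, w ∈ maxSet Δ ↔ w ∈ Δ ∧ (w ∈ A ↔ (u ∈ A ↔ u ∈ maxSet Δ)) := fun w => by
    by_cases hwΔ : w ∈ Δ
    · have := eq_iff_iff.1 (hconn.constant hconst hwΔ hu)
      tauto
    · exact iff_of_false (fun h => hwΔ h.1) fun h => hwΔ h.1
  by_cases hcu : u ∈ A ↔ u ∈ maxSet Δ
  · refine .inl ⟨⟨hA, hB, hAB, hconn⟩, Set.ext fun w => ?_⟩
    rw [hmax, Set.mem_union, Set.mem_sdiff, Set.mem_sdiff]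
    tauto
  · refine .inr ⟨PsiP.symm ⟨hA, hB, hAB, hconn⟩, Set.ext fun w => ?_⟩
    rw [union_comm, hmax, Set.mem_union, Set.mem_sdiff, Set.mem_sdiff]
    tauto

lemma OrientedPsiP.not_swap (h : OrientedPsiP A B) : ¬ OrientedPsiP B A := by
  rintro ⟨-, hBA⟩
  rw [union_comm, ← h.2] at hBA
  refine h.1.2.2.1 (Set.ext fun x => ?_)
  have := Set.ext_iff.1 hBA x
  simp only [Set.mem_sdiff] at this
  tauto

end Orientation

section Bijection

variable {P : Type*} [PartialOrder P]

/-- The inverse of `(I, J) ↦ (FmapA I J, FmapB I J)`. -/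
def idealsOfAntichains (A B : Set P) : Set P × Set P :=
  ((lowerClosure A : Set P) \ upperClosure ((A \ B) ∪ (B \ A)), lowerClosure A)

lemma connIn_singleton (v : P) : ConnIn ({v} : Set P) := by
  rintro x rfl y rfl
  exact .refl

lemma maxSet_singleton (v : P) : maxSet ({v} : Set P) = {v} :=
  Set.ext fun _ => ⟨fun h => h.1, fun h => ⟨h, fun _ hy _ => h.trans hy.symm⟩⟩

namespace OmegaP

variable {I J : Set P} (h : OmegaP I J)
include h

lemma mem_sdiff_of_le {x y : P} (hx : x ∈ J \ I) (hy : y ∈ J) (hxy : x ≤ y) : y ∈ J \ I :=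
  ⟨hy, fun hyI => hx.2 (h.1 hxy hyI)⟩

lemma fmap_sdiff_of_eq_singleton {v : P} (hv : J \ I = {v}) :
    FmapA I J \ FmapB I J = {v} ∧ FmapB I J \ FmapA I J = ∅ := by
  have hS : ∀ x, x ∈ J \ I ↔ x = v := fun x => by rw [hv, mem_singleton_iff]
  have hvS : v ∈ J \ I := (hS v).2 rfl
  have hvmax : v ∈ maxSet J :=
    ⟨hvS.1, fun y hy hvy => ((hS y).1 (h.mem_sdiff_of_le hvS hy hvy)).symm⟩
  have hB : FmapB I J = I ∩ maxSet J := by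
    rw [FmapB, if_pos (hv ▸ ncard_singleton v), empty_union,
      maxSet_inter_maxSet_of_subset h.2.2.1.subset]
  have hI : ∀ x ∈ J, x ∈ I ↔ x ≠ v := fun x hx =>
    ⟨fun hxI hxv => hvS.2 (hxv ▸ hxI), fun hxv => by_contra fun hxI => hxv ((hS x).1 ⟨hx, hxI⟩)⟩
  rw [FmapA, hB]
  refine ⟨Set.ext fun x => ⟨fun hx => ?_, ?_⟩, Set.ext fun x => ⟨fun hx => hx.2 hx.1.2, False.elim⟩⟩
  · by_contra hxv
    exact hx.2 ⟨(hI x hx.1.1).2 hxv, hx.1⟩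
  · rintro rfl
    exact ⟨hvmax, fun hv' => hvS.2 hv'.1⟩

lemma orientedPsiP_fmap_of_eq_singleton {v : P} (hv : J \ I = {v}) :
    OrientedPsiP (FmapA I J) (FmapB I J) := by
  obtain ⟨hAB, hBA⟩ := h.fmap_sdiff_of_eq_singleton hv
  refine ⟨⟨isAntichain_maxSet J, (isAntichain_maxSet J).subset (sdiff_eq_empty.1 hBA),
    fun heq => ?_, ?_⟩, ?_⟩
  · rw [heq, sdiff_self] at hAB
    exact singleton_ne_empty v hAB.symm
  · rw [hAB, hBA, union_empty]
    exact connIn_singleton v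
  · rw [hAB, hBA, union_empty, maxSet_singleton]

lemma fmapB_of_ncard_ne_one (h1 : (J \ I).ncard ≠ 1) :
    FmapB I J = minSet (J \ I) ∪ (I ∩ maxSet J) := by
  rw [FmapB, if_neg h1, maxSet_inter_maxSet_of_subset h.2.2.1.subset]

/-- When `J \ I` has at least two elements, connectedness gives every element a comparable
neighbour in `J \ I`. -/
lemma notMem_maxSet_of_mem_minSet (h1 : (J \ I).ncard ≠ 1) {v : P} (hv : v ∈ minSet (J \ I)) :
    v ∉ maxSet J := by
  obtain ⟨w, hw, hwv⟩ : ∃ w ∈ J \ I, w ≠ v := by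
    by_contra! hall
    exact h1 (ncard_eq_one.2 ⟨v, eq_singleton_iff_unique_mem.2 ⟨hv.1, hall⟩⟩)
  obtain ⟨z, hz, hzv, hvz | hzv'⟩ := h.2.2.2.exists_comparable_ne hv.1 hw hwv.symm
  · exact fun hmax => hzv (hmax.2 z hz.1 hvz).symm
  · exact fun _ => hzv (hv.2 z hz hzv').symm

lemma fmap_sdiff_of_ncard_ne_one (h1 : (J \ I).ncard ≠ 1) :
    FmapA I J \ FmapB I J = maxSet J ∩ (J \ I) ∧ FmapB I J \ FmapA I J = minSet (J \ I) := by
  rw [h.fmapB_of_ncard_ne_one h1, FmapA]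
  refine ⟨Set.ext fun x => ⟨fun hx => ?_, fun hx => ⟨hx.1, ?_⟩⟩,
    Set.ext fun x => ⟨?_, fun hx => ?_⟩⟩
  · exact ⟨hx.1, hx.1.1, fun hxI => hx.2 (.inr ⟨hxI, hx.1⟩)⟩
  · rintro (hmin | hI)
    exacts [h.notMem_maxSet_of_mem_minSet h1 hmin hx.1, hx.2.2 hI.1]
  · rintro ⟨hmin | hI, hx⟩
    exacts [hmin, absurd hI.2 hx]
  · exact ⟨.inl hx, h.notMem_maxSet_of_mem_minSet h1 hx⟩

lemma symmDiff_fmap_subset :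
    (FmapA I J \ FmapB I J) ∪ (FmapB I J \ FmapA I J) ⊆ J \ I := by
  by_cases h1 : (J \ I).ncard = 1
  · obtain ⟨v, hv⟩ := ncard_eq_one.1 h1
    rw [(h.fmap_sdiff_of_eq_singleton hv).1, (h.fmap_sdiff_of_eq_singleton hv).2, union_empty, hv]
  · rw [(h.fmap_sdiff_of_ncard_ne_one h1).1, (h.fmap_sdiff_of_ncard_ne_one h1).2]
    exact union_subset inter_subset_right (minSet_subset _)

variable [Finite P]

lemma exists_mem_maxSet_le {x : P} (hx : x ∈ J \ I) : ∃ m ∈ maxSet J ∩ (J \ I), x ≤ m := by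
  obtain ⟨m, hm, hxm⟩ := exists_le_mem_maxSet hx.1
  exact ⟨m, ⟨hm, h.mem_sdiff_of_le hx hm.1 hxm⟩, hxm⟩

lemma exists_mem_symmDiff_fmap_le {x : P} (hx : x ∈ J \ I) :
    ∃ d ∈ (FmapA I J \ FmapB I J) ∪ (FmapB I J \ FmapA I J), d ≤ x := by
  by_cases h1 : (J \ I).ncard = 1
  · obtain ⟨v, hv⟩ := ncard_eq_one.1 h1
    rw [(h.fmap_sdiff_of_eq_singleton hv).1, (h.fmap_sdiff_of_eq_singleton hv).2, union_empty]
    exact ⟨x, hv ▸ hx, le_rfl⟩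
  · rw [(h.fmap_sdiff_of_ncard_ne_one h1).2]
    obtain ⟨m, hm, hmx⟩ := exists_mem_minSet_le hx
    exact ⟨m, .inr hm, hmx⟩

lemma orientedPsiP_fmap_of_ncard_ne_one (h1 : (J \ I).ncard ≠ 1) :
    OrientedPsiP (FmapA I J) (FmapB I J) := by
  obtain ⟨hAB, hBA⟩ := h.fmap_sdiff_of_ncard_ne_one h1
  have hΔ : maxSet J ∩ (J \ I) ∪ minSet (J \ I) ⊆ J \ I :=
    union_subset inter_subset_right (minSet_subset _)
  obtain ⟨x, hx⟩ := nonempty_of_ssubset h.2.2.1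
  obtain ⟨m, hm, -⟩ := h.exists_mem_maxSet_le hx
  refine ⟨⟨isAntichain_maxSet J, ?_, fun heq => ?_, ?_⟩, ?_⟩
  · rw [h.fmapB_of_ncard_ne_one h1]
    rintro a (ha | ha) b (hb | hb) hne hab
    · exact isAntichain_minSet _ ha hb hne hab
    · exact (h.mem_sdiff_of_le ha.1 hb.2.1 hab).2 hb.1
    · exact hne (ha.2.2 b hb.1.1 hab)
    · exact isAntichain_maxSet J ha.2 hb.2 hne hab
  · rw [heq, sdiff_self] at hAB
    exact (hAB ▸ hm : m ∈ (∅ : Set P))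
  · rw [hAB, hBA]
    refine h.2.2.2.subset_of_bounds hΔ (fun x hx => ?_) (fun x hx => ?_)
    · obtain ⟨d, hd, hdx⟩ := exists_mem_minSet_le hx
      exact ⟨d, .inr hd, hdx⟩
    · obtain ⟨d, hd, hxd⟩ := h.exists_mem_maxSet_le hx
      exact ⟨d, .inl hd, hxd⟩
  · rw [hAB, hBA]
    refine Set.ext fun x => ⟨fun hx => ⟨.inl hx, fun y hy hxy => hx.1.2 y (hΔ hy).1 hxy⟩,
      fun hx => ?_⟩
    obtain ⟨d, hd, hxd⟩ := h.exists_mem_maxSet_le (hΔ hx.1)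
    exact hx.2 d (.inl hd) hxd ▸ hd

lemma orientedPsiP_fmap : OrientedPsiP (FmapA I J) (FmapB I J) := by
  by_cases h1 : (J \ I).ncard = 1
  · exact h.orientedPsiP_fmap_of_eq_singleton (ncard_eq_one.1 h1).choose_spec
  · exact h.orientedPsiP_fmap_of_ncard_ne_one h1

lemma idealsOfAntichains_fmap : idealsOfAntichains (FmapA I J) (FmapB I J) = (I, J) := by
  have hJ : (lowerClosure (FmapA I J) : Set P) = J := lowerClosure_maxSet h.2.1
  refine Prod.ext (Set.ext fun x => ?_) hJ
  simp only [idealsOfAntichains, hJ, Set.mem_sdiff, SetLike.mem_coe, mem_upperClosure]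
  refine ⟨fun ⟨hxJ, hx⟩ => by_contra fun hxI => ?_, fun hxI => ⟨h.2.2.1.subset hxI, ?_⟩⟩
  · exact hx (h.exists_mem_symmDiff_fmap_le ⟨hxJ, hxI⟩)
  · rintro ⟨d, hd, hdx⟩
    exact (h.symmDiff_fmap_subset hd).2 (h.1 hdx hxI)

end OmegaP

lemma sdiff_idealsOfAntichains (A B : Set P) :
    (idealsOfAntichains A B).2 \ (idealsOfAntichains A B).1 =
      (lowerClosure A : Set P) ∩ upperClosure ((A \ B) ∪ (B \ A)) :=
  sdiff_sdiff_right_self _ _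

namespace OrientedPsiP

variable {A B : Set P} (h : OrientedPsiP A B)
include h

lemma inter_idealsOfAntichains : (idealsOfAntichains A B).1 ∩ A = A ∩ B := by
  obtain ⟨⟨hA, hB, -, -⟩, -⟩ := h
  refine Set.ext fun x => ⟨fun ⟨hxI, hxA⟩ => ⟨hxA, by_contra fun hxB => ?_⟩,
    fun ⟨hxA, hxB⟩ => ⟨⟨subset_lowerClosure hxA, fun hx => ?_⟩, hxA⟩⟩
  · exact hxI.2 (subset_upperClosure (.inl ⟨hxA, hxB⟩))
  · obtain ⟨d, hd | hd, hdx⟩ := mem_upperClosure.1 hx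
    · exact hd.2 (hA.eq hd.1 hxA hdx ▸ hxB)
    · exact hd.2 (hB.eq hd.1 hxB hdx ▸ hxA)

variable [Finite P]

lemma exists_lt_of_mem_sdiff {b : P} (hb : b ∈ B \ A) : ∃ a ∈ A \ B, b < a := by
  obtain ⟨m, hm, hbm⟩ := exists_le_mem_maxSet (S := (A \ B) ∪ (B \ A)) (.inr hb)
  rw [← h.2] at hm
  exact ⟨m, hm, hbm.lt_of_ne fun hbm' => hb.2 (hbm' ▸ hm.1)⟩

lemma symmDiff_subset_lowerClosure : (A \ B) ∪ (B \ A) ⊆ lowerClosure A := by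
  rintro x (hx | hx)
  · exact subset_lowerClosure hx.1
  · obtain ⟨a, ha, hxa⟩ := h.exists_lt_of_mem_sdiff hx
    exact mem_lowerClosure.2 ⟨a, ha.1, hxa.le⟩

lemma symmDiff_subset_sdiff_idealsOfAntichains :
    (A \ B) ∪ (B \ A) ⊆ (idealsOfAntichains A B).2 \ (idealsOfAntichains A B).1 :=
  sdiff_idealsOfAntichains A B ▸ subset_inter h.symmDiff_subset_lowerClosure subset_upperClosure

lemma omegaP_idealsOfAntichains :
    OmegaP (idealsOfAntichains A B).1 (idealsOfAntichains A B).2 := by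
  obtain ⟨u, hu⟩ := nonempty_symmDiff_of_ne h.1.2.2.1
  refine ⟨(lowerClosure A).lower.sdiff_of_isUpperSet (upperClosure _).upper,
    (lowerClosure A).lower, (ssubset_iff_of_subset sdiff_subset).2
      ⟨u, h.symmDiff_subset_sdiff_idealsOfAntichains hu⟩, ?_⟩
  rw [sdiff_idealsOfAntichains A B]
  refine h.1.2.2.2.superset_of_comparable
    (subset_inter h.symmDiff_subset_lowerClosure subset_upperClosure) fun x hx => ?_
  obtain ⟨d, hd, hdx⟩ := mem_upperClosure.1 hx.2
  exact ⟨d, hd, .inl hdx⟩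

lemma minSet_sdiff_idealsOfAntichains
    (h1 : ((idealsOfAntichains A B).2 \ (idealsOfAntichains A B).1).ncard ≠ 1) :
    minSet ((idealsOfAntichains A B).2 \ (idealsOfAntichains A B).1) = B \ A := by
  have hΩ := h.omegaP_idealsOfAntichains
  have hS := h.symmDiff_subset_sdiff_idealsOfAntichains
  have hSeq := sdiff_idealsOfAntichains A B
  set S := (idealsOfAntichains A B).2 \ (idealsOfAntichains A B).1
  have hbelow : ∀ y ∈ S, ∃ d ∈ (A \ B) ∪ (B \ A), d ≤ y := fun y hy => by
    rw [hSeq] at hy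
    exact mem_upperClosure.1 hy.2
  refine Set.ext fun x => ⟨fun hx => ?_, fun hx => ⟨hS (.inr hx), fun y hy hyx => ?_⟩⟩
  · obtain ⟨d, hd, hdx⟩ := hbelow x hx.1
    obtain rfl := hx.2 d (hS hd) hdx
    refine hd.resolve_left fun hxA => ?_
    obtain ⟨w, hw, hwx⟩ : ∃ w ∈ S, w ≠ x := by
      by_contra! hall
      exact h1 (ncard_eq_one.2 ⟨x, eq_singleton_iff_unique_mem.2 ⟨hx.1, hall⟩⟩)
    obtain ⟨z, hz, hzx, hxz | hzx'⟩ := hΩ.2.2.2.exists_comparable_ne hx.1 hw hwx.symm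
    · obtain ⟨a, ha, hza⟩ := mem_lowerClosure.1 hz.1
      obtain rfl := h.1.1.eq hxA.1 ha (hxz.trans hza)
      exact hzx (le_antisymm hza hxz)
    · exact hzx (hx.2 z hz hzx').symm
  · obtain ⟨d, hd, hdy⟩ := hbelow y hy
    rcases (hdy.trans hyx).eq_or_lt with hdx | hdx
    · exact le_antisymm (hdx ▸ hdy) hyx
    · have := mem_maxSet_of_lt h.1.1 h.1.2.1 hd (.inr hx) hdx
      rw [← h.2] at this
      exact (hx.2 this.1).elim

lemma fmap_idealsOfAntichains :
    (FmapA (idealsOfAntichains A B).1 (idealsOfAntichains A B).2,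
      FmapB (idealsOfAntichains A B).1 (idealsOfAntichains A B).2) = (A, B) := by
  have hA : maxSet (idealsOfAntichains A B).2 = A := maxSet_lowerClosure h.1.1
  refine Prod.ext hA ?_
  have hIJ : (idealsOfAntichains A B).1 ⊆ (idealsOfAntichains A B).2 := sdiff_subset
  simp only [FmapB]
  rw [maxSet_inter_maxSet_of_subset hIJ, hA, h.inter_idealsOfAntichains]
  split_ifs with h1
  · obtain ⟨v, hv⟩ := ncard_eq_one.1 h1
    rw [empty_union, inter_eq_right]
    intro b hb
    by_contra hbA
    obtain ⟨a, ha, hba⟩ := h.exists_lt_of_mem_sdiff ⟨hb, hbA⟩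
    have hS := h.symmDiff_subset_sdiff_idealsOfAntichains
    rw [hv] at hS
    exact hba.ne ((hS (.inr ⟨hb, hbA⟩)).trans (hS (.inl ha)).symm)
  · rw [h.minSet_sdiff_idealsOfAntichains h1, inter_comm, sdiff_union_inter]

end OrientedPsiP

lemma ncard_omegaP_eq_ncard_orientedPsiP [Finite P] :
    {p : Set P × Set P | OmegaP p.1 p.2}.ncard =
      {p : Set P × Set P | OrientedPsiP p.1 p.2}.ncard := by
  refine (InvOn.bijOn (f := fun p : Set P × Set P => (FmapA p.1 p.2, FmapB p.1 p.2))
    (f' := fun p : Set P × Set P => idealsOfAntichains p.1 p.2) ⟨?_, ?_⟩ ?_ ?_).ncard_eq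
  · exact fun p hp => OmegaP.idealsOfAntichains_fmap hp
  · exact fun p hp => OrientedPsiP.fmap_idealsOfAntichains hp
  · exact fun p hp => OmegaP.orientedPsiP_fmap hp
  · exact fun p hp => OrientedPsiP.omegaP_idealsOfAntichains hp

end Bijection

lemma setOf_edges_chainPolytope {P : Type*} [Fintype P] [PartialOrder P] :
    {e : Set (P → ℝ) | ∃ u v, IsEdgeOf (chainPolytope P) u v ∧ e = segment ℝ u v} =
      (fun p : Set P × Set P => segment ℝ (rho p.1) (rho p.2)) ''
        {p | OrientedPsiP p.1 p.2} := by
  ext e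
  constructor
  · rintro ⟨u, v, ⟨huv, h⟩, rfl⟩
    obtain ⟨A, hA, rfl⟩ := exists_rho_of_mem_extremePoints_chainPolytope h.left_mem_extremePoints
    obtain ⟨B, hB, rfl⟩ := exists_rho_of_mem_extremePoints_chainPolytope h.right_mem_extremePoints
    have hψ : PsiP A B := ⟨hA, hB, by rintro rfl; exact huv rfl,
      connIn_of_isExtreme_chainPolytope hA hB h⟩
    rcases hψ.orientedPsiP_or with hAB | hBA
    · exact ⟨(A, B), hAB, rfl⟩
    · exact ⟨(B, A), hBA, segment_symm ℝ _ _⟩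
  · rintro ⟨⟨A, B⟩, h, rfl⟩
    exact ⟨rho A, rho B, ⟨rho_injective.ne h.1.2.2.1, isExtreme_chainPolytope_of_psiP h.1⟩, rfl⟩

theorem stmt5 {P : Type*} [Fintype P] [PartialOrder P] :
    {e : Set (P → ℝ) | ∃ u v, IsEdgeOf (orderPolytope P) u v ∧ e = segment ℝ u v}.ncard =
    {e : Set (P → ℝ) | ∃ u v, IsEdgeOf (chainPolytope P) u v ∧ e = segment ℝ u v}.ncard := by
  rw [setOf_edges_orderPolytope, setOf_edges_chainPolytope,
    (injOn_segment_rho fun p hp hp' => ssubset_asymm hp.2.2.1 hp'.2.2.1).ncard_image,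
    (injOn_segment_rho fun p hp => hp.not_swap).ncard_image, ncard_omegaP_eq_ncard_orientedPsiP]
end

section
/- If J \ I is a connected nonempty subset of a finite poset P with I ⊂ J poset ideals, then J \ I = {x ∈ P : x ≤ b for some b ∈ max(J \ I)} ∩ {x ∈ P : a ≤ x for some a ∈ min(J \ I)}; consequently J \ I is determined by max(J \ I) and min(J \ I) among such differences, i.e., if additionally J \ I' is connected with max(J \ I) = max(J \ I') and min(J \ I) = min(J \ I') then I = I'. -/
/-! A difference `J \ I` of lower sets is order-convex, and a finite order-convex set consists
exactly of the elements lying above one of its minimal elements and below one of its maximal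
elements. Hence `J \ I` is recovered from its maximal and minimal elements, and `I` from `J \ I`. -/

section

variable {P : Type*} [PartialOrder P] {S T : Set P}

lemma maxSet_eq_setOf_maximal (S : Set P) : maxSet S = {x | Maximal (· ∈ S) x} :=
  Set.ext fun _ => maximal_iff.symm

lemma minSet_eq_setOf_minimal (S : Set P) : minSet S = {x | Minimal (· ∈ S) x} :=
  Set.ext fun _ => minimal_iff.symm

lemma Set.Finite.exists_mem_maxSet_le (hS : S.Finite) {x : P} (hx : x ∈ S) :
    ∃ b ∈ maxSet S, x ≤ b := by
  obtain ⟨b, hxb, hb⟩ := hS.exists_le_maximal hx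
  exact ⟨b, (maxSet_eq_setOf_maximal S).symm ▸ hb, hxb⟩

lemma Set.Finite.exists_mem_minSet_ge (hS : S.Finite) {x : P} (hx : x ∈ S) :
    ∃ a ∈ minSet S, a ≤ x := by
  obtain ⟨a, hax, ha⟩ := hS.exists_le_minimal hx
  exact ⟨a, (minSet_eq_setOf_minimal S).symm ▸ ha, hax⟩

theorem Set.OrdConnected.eq_lowerClosure_maxSet_inter_upperClosure_minSet
    (hS : S.OrdConnected) (hfin : S.Finite) :
    S = {x | ∃ b ∈ maxSet S, x ≤ b} ∩ {x | ∃ a ∈ minSet S, a ≤ x} := by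
  ext x
  constructor
  · intro hx
    exact ⟨hfin.exists_mem_maxSet_le hx, hfin.exists_mem_minSet_ge hx⟩
  · rintro ⟨⟨b, hb, hxb⟩, ⟨a, ha, hax⟩⟩
    exact hS.out ha.1 hb.1 ⟨hax, hxb⟩

theorem Set.OrdConnected.eq_of_maxSet_eq_of_minSet_eq (hS : S.OrdConnected) (hT : T.OrdConnected)
    (hSfin : S.Finite) (hTfin : T.Finite) (hmax : maxSet S = maxSet T)
    (hmin : minSet S = minSet T) : S = T := by
  rw [hS.eq_lowerClosure_maxSet_inter_upperClosure_minSet hSfin,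
    hT.eq_lowerClosure_maxSet_inter_upperClosure_minSet hTfin, hmax, hmin]

lemma IsLowerSet.ordConnected_diff {I J : Set P} (hJ : IsLowerSet J) (hI : IsLowerSet I) :
    (J \ I).OrdConnected :=
  hJ.ordConnected.inter hI.compl.ordConnected

end

theorem stmt11_general {P : Type*} [Fintype P] [PartialOrder P] (I I' J : Set P)
    (hI : IsLowerSet I) (hI' : IsLowerSet I') (hJ : IsLowerSet J)
    (hIJ : I ⊂ J) (hI'J : I' ⊂ J) :
    (J \ I = {x | ∃ b ∈ maxSet (J \ I), x ≤ b} ∩ {x | ∃ a ∈ minSet (J \ I), a ≤ x}) ∧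
    (ConnIn (J \ I') → maxSet (J \ I) = maxSet (J \ I') →
      minSet (J \ I) = minSet (J \ I') → I = I') := by
  refine ⟨(hJ.ordConnected_diff hI).eq_lowerClosure_maxSet_inter_upperClosure_minSet
    (Set.toFinite _), fun _ hmax hmin => ?_⟩
  have hdiff : J \ I = J \ I' :=
    (hJ.ordConnected_diff hI).eq_of_maxSet_eq_of_minSet_eq (hJ.ordConnected_diff hI')
      (Set.toFinite _) (Set.toFinite _) hmax hmin
  calc I = J \ (J \ I) := (Set.sdiff_sdiff_cancel_left hIJ.subset).symm
    _ = J \ (J \ I') := by rw [hdiff]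
    _ = I' := Set.sdiff_sdiff_cancel_left hI'J.subset

theorem stmt11 {P : Type*} [Fintype P] [PartialOrder P] (I I' J : Set P)
    (hI : IsLowerSet I) (hI' : IsLowerSet I') (hJ : IsLowerSet J)
    (hIJ : I ⊂ J) (hI'J : I' ⊂ J) (hc : ConnIn (J \ I)) :
    (J \ I = {x | ∃ b ∈ maxSet (J \ I), x ≤ b} ∩ {x | ∃ a ∈ minSet (J \ I), a ≤ x}) ∧
    (ConnIn (J \ I') → maxSet (J \ I) = maxSet (J \ I') →
      minSet (J \ I) = minSet (J \ I') → I = I') :=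
  stmt11_general I I' J hI hI' hJ hIJ hI'J
end

section
/- Let P be a finite poset containing the poset X (five elements a,b,c,g,h with a < c, b < c, c < g, c < h) as a subposet. Then the degree sequence of the 1-skeleton of O(P) differs from the degree sequence of the 1-skeleton of C(P); in particular the minimum vertex degree of the 1-skeleton of O(P) is at least |P| + 1 while the minimum vertex degree of the 1-skeleton of C(P) is at most |P|. -/
section Skeletons

variable {P : Type*} [PartialOrder P]

lemma connIn_of_forall_exists_comparable {S : Set P} {p : P} (hp : p ∈ S)
    (h : ∀ x ∈ S, ∃ y ∈ S, (x ≤ y ∨ y ≤ x) ∧ (y ≤ p ∨ p ≤ y)) : ConnIn S := by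
  have reach : ∀ x ∈ S, Relation.ReflTransGen
      (fun u v => u ∈ S ∧ v ∈ S ∧ (u ≤ v ∨ v ≤ u)) x p := fun x hx => by
    obtain ⟨y, hy, hxy, hyp⟩ := h x hx
    exact .head ⟨hx, hy, hxy⟩ (.single ⟨hy, hp, hyp⟩)
  intro x hx y hy
  exact (reach x hx).trans <| Relation.ReflTransGen.mono
    (fun _ _ ⟨hu, hv, huv⟩ => ⟨hv, hu, huv.symm⟩) _ _
    (Relation.ReflTransGen.swap _ _ (reach y hy))

lemma IsAntichain.subsingleton_of_connIn {A : Set P} (hA : IsAntichain (· ≤ ·) A)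
    (hconn : ConnIn A) : A.Subsingleton := by
  intro x hx y hy
  induction hconn x hx y hy with
  | refl => rfl
  | tail _ hstep ih =>
    obtain ⟨hu, hv, huv | hvu⟩ := hstep
    exacts [(ih hu).trans (hA.eq hu hv huv), (ih hu).trans (hA.eq hv hu hvu).symm]

lemma IsAntichain.subset_of_forall_exists {α : Type*} {r : α → α → Prop} [IsTrans α r]
    [Std.Antisymm r] {S T : Set α} (hS : IsAntichain r S)
    (hST : ∀ s ∈ S, ∃ t ∈ T, r t s) (hTS : ∀ t ∈ T, ∃ s ∈ S, r s t) : S ⊆ T := by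
  intro s hs
  obtain ⟨t, ht, hts⟩ := hST s hs
  obtain ⟨s', hs', hs't⟩ := hTS t ht
  obtain rfl : s' = s := hS.eq hs' hs (_root_.trans hs't hts)
  rwa [← antisymm hts hs't]

lemma isAntichain_pair {α : Type*} {r : α → α → Prop} {a b : α} (hab : ¬ r a b)
    (hba : ¬ r b a) : IsAntichain r {a, b} :=
  isAntichain_insert.2
    ⟨Set.subsingleton_singleton.isAntichain _, fun _ hb _ => hb ▸ ⟨hab, hba⟩⟩

lemma orderSkeleton_adj_of_ssubset {I J : {I : Set P // IsLowerSet I}} (hIJ : I.1 ⊂ J.1)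
    (hconn : ConnIn (J.1 \ I.1)) : (orderSkeleton P).Adj I J :=
  (SimpleGraph.fromRel_adj _ _ _).2
    ⟨fun h => hIJ.ne (congrArg Subtype.val h), .inl ⟨hIJ, hconn⟩⟩

open Classical in
noncomputable def toggle (I S : Set P) : Set P :=
  if S ⊆ I then I \ upperClosure S else I ∪ lowerClosure S

def IsToggleable (I S : Set P) : Prop :=
  S.Nonempty ∧ IsAntichain (· ≤ ·) S ∧
    ∃ p, (p ∈ I ∧ S ⊆ Set.Iic p) ∨ (p ∉ I ∧ S ⊆ Set.Ici p)

lemma toggle_of_subset {I S : Set P} (h : S ⊆ I) : toggle I S = I \ upperClosure S :=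
  if_pos h

lemma toggle_of_not_subset {I S : Set P} (h : ¬ S ⊆ I) : toggle I S = I ∪ lowerClosure S :=
  if_neg h

lemma toggle_subset_self_iff {I S : Set P} : toggle I S ⊆ I ↔ S ⊆ I := by
  by_cases h : S ⊆ I
  · simp only [toggle_of_subset h, Set.sdiff_subset, h]
  · simp only [toggle_of_not_subset h, Set.union_subset_iff, subset_refl, true_and, h,
      iff_false]
    exact fun hS => h (subset_lowerClosure.trans hS)

lemma IsToggleable.notMem_of_not_subset {I S : Set P} (hI : IsLowerSet I)
    (hS : IsToggleable I S) (h : ¬ S ⊆ I) {s : P} (hs : s ∈ S) : s ∉ I := by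
  obtain ⟨-, -, p, ⟨hpI, hSp⟩ | ⟨hpI, hSp⟩⟩ := hS
  · exact absurd (fun t ht => hI (hSp ht) hpI) h
  · exact fun hsI => hpI (hI (hSp hs) hsI)

lemma IsLowerSet.toggle {I : Set P} (hI : IsLowerSet I) (S : Set P) :
    IsLowerSet (toggle I S) := by
  unfold _root_.toggle
  split
  exacts [hI.sdiff_of_isUpperSet (upperClosure S).upper, hI.union (lowerClosure S).lower]

lemma isToggleable_singleton (I : Set P) (x : P) : IsToggleable I {x} := by
  refine ⟨Set.singleton_nonempty x, Set.subsingleton_singleton.isAntichain _, x, ?_⟩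
  by_cases hx : x ∈ I
  exacts [.inl ⟨hx, by simp⟩, .inr ⟨hx, by simp⟩]

lemma orderSkeleton_adj_toggle {I S : Set P} (hI : IsLowerSet I) (hS : IsToggleable I S) :
    (orderSkeleton P).Adj ⟨I, hI⟩ ⟨toggle I S, hI.toggle S⟩ := by
  obtain ⟨⟨s, hs⟩, -, p, ⟨hpI, hSp⟩ | ⟨hpI, hSp⟩⟩ := hS
  · have hSI : S ⊆ I := fun t ht => hI (hSp ht) hpI
    have hpS : p ∈ upperClosure S := mem_upperClosure.2 ⟨s, hs, hSp hs⟩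
    refine (orderSkeleton_adj_of_ssubset ?_ ?_).symm <;> dsimp only <;>
      rw [toggle_of_subset hSI]
    · exact ⟨Set.sdiff_subset, fun h => (h hpI).2 hpS⟩
    · rw [Set.sdiff_sdiff_right_self]
      refine connIn_of_forall_exists_comparable ⟨hpI, hpS⟩ fun x ⟨_, hx⟩ => ?_
      obtain ⟨t, ht, htx⟩ := mem_upperClosure.1 hx
      exact ⟨t, ⟨hSI ht, subset_upperClosure ht⟩, .inr htx, .inl (hSp ht)⟩
  · have hSI : ¬ S ⊆ I := fun h => hpI (hI (hSp hs) (h hs))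
    have hpS : p ∈ lowerClosure S := mem_lowerClosure.2 ⟨s, hs, hSp hs⟩
    refine orderSkeleton_adj_of_ssubset ?_ ?_ <;> dsimp only <;>
      rw [toggle_of_not_subset hSI]
    · exact ⟨Set.subset_union_left, fun h => hpI (h (.inr hpS))⟩
    · rw [Set.union_sdiff_left]
      refine connIn_of_forall_exists_comparable ⟨hpS, hpI⟩ fun x ⟨hx, _⟩ => ?_
      obtain ⟨t, ht, hxt⟩ := mem_lowerClosure.1 hx
      exact ⟨t, ⟨subset_lowerClosure ht, fun htI => hpI (hI (hSp ht) htI)⟩, .inl hxt,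
        .inr (hSp ht)⟩

lemma toggle_injOn {I : Set P} (hI : IsLowerSet I) :
    Set.InjOn (toggle I) {S | IsToggleable I S} := by
  intro S hS T hT hST
  have hSTI : S ⊆ I ↔ T ⊆ I := by
    rw [← toggle_subset_self_iff, hST, toggle_subset_self_iff]
  by_cases hSI : S ⊆ I
  · rw [toggle_of_subset hSI, toggle_of_subset (hSTI.1 hSI)] at hST
    have hcap : I ∩ upperClosure S = I ∩ upperClosure T := by
      rw [← Set.sdiff_sdiff_right_self, hST, Set.sdiff_sdiff_right_self]
    have above : ∀ {U V : Set P}, U ⊆ I → I ∩ upperClosure U = I ∩ upperClosure V →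
        ∀ u ∈ U, ∃ v ∈ V, v ≤ u := by
      intro U V hU h u hu
      have hu' : u ∈ I ∩ upperClosure V := h ▸ ⟨hU hu, subset_upperClosure hu⟩
      exact mem_upperClosure.1 hu'.2
    have hTI := hSTI.1 hSI
    exact (hS.2.1.subset_of_forall_exists (above hSI hcap) (above hTI hcap.symm)).antisymm
      (hT.2.1.subset_of_forall_exists (above hTI hcap.symm) (above hSI hcap))
  · have hTI : ¬ T ⊆ I := hSTI.not.1 hSI
    rw [toggle_of_not_subset hSI, toggle_of_not_subset hTI] at hST
    have below : ∀ {U V : Set P}, IsToggleable I U → ¬ U ⊆ I →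
        I ∪ lowerClosure U = I ∪ lowerClosure V → ∀ u ∈ U, ∃ v ∈ V, u ≤ v := by
      intro U V hU hUI h u hu
      have hu' : u ∈ I ∪ lowerClosure V := h ▸ Or.inr (subset_lowerClosure hu)
      exact mem_lowerClosure.1 (hu'.resolve_left (hU.notMem_of_not_subset hI hUI hu))
    exact (hS.2.1.swap.subset_of_forall_exists (below hS hSI hST)
      (below hT hTI hST.symm)).antisymm
      (hT.2.1.swap.subset_of_forall_exists (below hT hTI hST.symm) (below hS hSI hST))

lemma ncard_isToggleable_le_ncard_neighborSet [Finite P] {I : Set P} (hI : IsLowerSet I) :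
    {S | IsToggleable I S}.ncard ≤ ((orderSkeleton P).neighborSet ⟨I, hI⟩).ncard :=
  Set.ncard_le_ncard_of_injOn (fun S => ⟨toggle I S, hI.toggle S⟩)
    (fun _ hS => orderSkeleton_adj_toggle hI hS)
    (fun _ hS _ hT h => toggle_injOn hI hS hT (congrArg Subtype.val h))

lemma ContainsX.exists_isToggleable_nontrivial (hX : ContainsX P) (I : Set P) :
    ∃ E, IsToggleable I E ∧ E.Nontrivial := by
  obtain ⟨a, b, c, g, h, hac, hbc, hcg, hch, hab, hba, hgh, hhg⟩ := hX
  by_cases hc : c ∈ I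
  · refine ⟨{a, b}, ⟨Set.insert_nonempty a {b}, isAntichain_pair hab hba, c,
      .inl ⟨hc, ?_⟩⟩, Set.nontrivial_pair fun e => hab e.le⟩
    simp [Set.insert_subset_iff, hac.le, hbc.le]
  · refine ⟨{g, h}, ⟨Set.insert_nonempty g {h}, isAntichain_pair hgh hhg, c,
      .inr ⟨hc, ?_⟩⟩, Set.nontrivial_pair fun e => hgh e.le⟩
    simp [Set.insert_subset_iff, hcg.le, hch.le]

lemma card_add_one_le_ncard_isToggleable [Finite P] {I E : Set P} (hE : IsToggleable I E)
    (hEn : E.Nontrivial) : Nat.card P + 1 ≤ {S | IsToggleable I S}.ncard := by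
  have hE_notMem : E ∉ Set.range ({·} : P → Set P) := by
    rintro ⟨z, rfl⟩
    exact Set.not_nontrivial_singleton hEn
  calc Nat.card P + 1 = (insert E (Set.range ({·} : P → Set P))).ncard := by
        rw [Set.ncard_insert_of_notMem hE_notMem,
          Set.ncard_range_of_injective Set.singleton_injective]
    _ ≤ {S | IsToggleable I S}.ncard :=
        Set.ncard_le_ncard <|
          Set.insert_subset hE (Set.range_subset_iff.2 (isToggleable_singleton I))

lemma chainSkeleton_neighborSet_empty_subset :
    (chainSkeleton P).neighborSet ⟨∅, Set.subsingleton_empty.isAntichain _⟩ ⊆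
      Set.range fun x : P => ⟨{x}, Set.subsingleton_singleton.isAntichain _⟩ := by
  rintro ⟨B, hB⟩ hadj
  rw [SimpleGraph.mem_neighborSet, chainSkeleton, SimpleGraph.fromRel_adj] at hadj
  obtain ⟨hne, hconn | hconn⟩ := hadj <;>
  · simp only [Set.empty_sdiff, Set.sdiff_empty, Set.empty_union, Set.union_empty] at hconn
    obtain ⟨x, rfl⟩ := (hB.subsingleton_of_connIn hconn).eq_empty_or_singleton.resolve_left
      fun h => hne (Subtype.ext h.symm)
    exact ⟨x, rfl⟩

lemma ncard_chainSkeleton_neighborSet_empty_le [Finite P] :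
    ((chainSkeleton P).neighborSet ⟨∅, Set.subsingleton_empty.isAntichain _⟩).ncard ≤
      Nat.card P := by
  refine (Set.ncard_le_ncard chainSkeleton_neighborSet_empty_subset).trans_eq ?_
  exact Set.ncard_range_of_injective fun x y h => Set.singleton_injective (congrArg Subtype.val h)

end Skeletons

lemma mem_degMultiset {V : Type*} [Fintype V] {G : SimpleGraph V} {n : ℕ} :
    n ∈ degMultiset G ↔ ∃ v, (G.neighborSet v).ncard = n := by
  simp [degMultiset]

theorem stmt15 {P : Type*} [Fintype P] [PartialOrder P] (hX : ContainsX P) :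
    degMultiset (orderSkeleton P) ≠ degMultiset (chainSkeleton P) ∧
    (∀ v : {I : Set P // IsLowerSet I},
      Fintype.card P + 1 ≤ ((orderSkeleton P).neighborSet v).ncard) ∧
    (∃ w : {A : Set P // IsAntichain (· ≤ ·) A},
      ((chainSkeleton P).neighborSet w).ncard ≤ Fintype.card P) := by
  have horder : ∀ v : {I : Set P // IsLowerSet I},
      Fintype.card P + 1 ≤ ((orderSkeleton P).neighborSet v).ncard := fun ⟨_, hI⟩ => by
    obtain ⟨E, hE, hEn⟩ := hX.exists_isToggleable_nontrivial _
    rw [← Nat.card_eq_fintype_card]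
    exact (card_add_one_le_ncard_isToggleable hE hEn).trans
      (ncard_isToggleable_le_ncard_neighborSet hI)
  obtain ⟨w, hw⟩ : ∃ w : {A : Set P // IsAntichain (· ≤ ·) A},
      ((chainSkeleton P).neighborSet w).ncard ≤ Fintype.card P :=
    ⟨_, Nat.card_eq_fintype_card (α := P) ▸ ncard_chainSkeleton_neighborSet_empty_le⟩
  refine ⟨fun heq => ?_, horder, w, hw⟩
  obtain ⟨v, hv⟩ := mem_degMultiset.1 (heq ▸ mem_degMultiset.2 ⟨w, rfl⟩)
  have := horder v
  omega
end
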